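/- arXiv:1204.2540 — 7 statements merged into one kernel-verified Lean document; each statement's English description precedes it below -/
import Mathlib

section
/- (Zeckendorf's theorem) Every positive natural number n may be written uniquely as a sum of non-consecutive Fibonacci numbers: n = F_{i₁} + ⋯ + F_{i_k} with k ≥ 1, 2 ≤ i₁, and i_j + 2 ≤ i_{j+1} for all 1 ≤ j ≤ k−1. -/
/-- A Zeckendorf representation of `n`: a nonempty list `l = [i₁, …, i_k]` of indices with
`i₁ ≥ 2`, each index at least 2 more than the previous one (hence strictly increasing,
non-consecutive), such that `n = F i₁ + ⋯ + F i_k`. -/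
def IsZeckendorfRep (n : ℕ) (l : List ℕ) : Prop :=
  l ≠ [] ∧ 2 ≤ l.headI ∧ l.Chain' (fun a b => a + 2 ≤ b) ∧ (l.map Nat.fib).sum = n

lemma rev_bridge {l : List ℕ} (hl : l ≠ []) :
    List.IsZeckendorfRep l.reverse ↔ (2 ≤ l.headI ∧ l.Chain' (fun a b => a + 2 ≤ b)) := by
  rw [List.IsZeckendorfRep, List.isChain_append, List.isChain_reverse]
  constructor
  · rintro ⟨h1, -, h2⟩
    refine ⟨?_, h1⟩
    have := h2 l.headI ?_ 0 rfl
    · simpa using this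
    · rw [List.getLast?_reverse]
      cases l with
      | nil => exact absurd rfl hl
      | cons a t => simp
  · rintro ⟨h1, h2⟩
    refine ⟨h2, List.isChain_singleton _, ?_⟩
    intro x hx y hy
    simp only [List.head?_cons, Option.mem_def, Option.some.injEq] at hy
    subst hy
    rw [List.getLast?_reverse] at hx
    cases l with
    | nil => exact absurd rfl hl
    | cons a t =>
      simp only [List.head?_cons, Option.mem_def, Option.some.injEq] at hx
      subst hx
      simpa using h1

/-- Zeckendorf's theorem: every positive natural number may be written uniquely as a sum of
non-consecutive Fibonacci numbers `n = F i₁ + ⋯ + F i_k` with `k ≥ 1`, `2 ≤ i₁`, and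
`i_j + 2 ≤ i_{j+1}`. -/
theorem zeckendorf (n : ℕ) (hn : 0 < n) : ∃! l : List ℕ, IsZeckendorfRep n l := by
  refine ⟨(Nat.zeckendorf n).reverse, ?_, ?_⟩
  · have hz : Nat.zeckendorf n ≠ [] := by
      rw [Nat.zeckendorf_of_pos hn]; simp
    have hne : (Nat.zeckendorf n).reverse ≠ [] := by simpa using hz
    have hrep : List.IsZeckendorfRep ((Nat.zeckendorf n).reverse).reverse := by
      rw [List.reverse_reverse]; exact Nat.isZeckendorfRep_zeckendorf n
    obtain ⟨h1, h2⟩ := (rev_bridge hne).1 hrep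
    exact ⟨hne, h1, h2, by rw [List.map_reverse, List.sum_reverse, Nat.sum_zeckendorf_fib]⟩
  · rintro l ⟨hne, h1, h2, h3⟩
    have : List.IsZeckendorfRep l.reverse := (rev_bridge hne).2 ⟨h1, h2⟩
    have := Nat.zeckendorf_sum_fib this
    rw [List.map_reverse, List.sum_reverse, h3] at this
    rw [this, List.reverse_reverse]
end

section
/- (Lemma 1) Let φ = (1+√5)/2, let m > 2 be an integer, and let n be a positive natural number with Zeckendorf representation n = F_{i₁} + ⋯ + F_{i_k} (so 2 ≤ i₁, i_j + 2 ≤ i_{j+1} for all j). Then ‖n·φ‖ < φ^{−m} if and only if either (I) i₁ ≥ m + 1, or (II) k ≥ 2, i₁ = m, and i₂ − m is odd. -/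
/-- The golden mean φ = (1 + √5)/2. -/
noncomputable def phi : ℝ := (1 + Real.sqrt 5) / 2

/-- The distance from a real number to the nearest integer. -/
noncomputable def distNearestInt (x : ℝ) : ℝ := |x - round x|

noncomputable def psi : ℝ := (1 - Real.sqrt 5) / 2

lemma sqrt5_sq : Real.sqrt 5 ^ 2 = 5 := Real.sq_sqrt (by norm_num)
lemma sqrt5_gt : 2 < Real.sqrt 5 := by
  nlinarith [sqrt5_sq, Real.sqrt_nonneg 5]
lemma phi_pos : 0 < phi := by unfold phi; nlinarith [sqrt5_gt]
lemma one_lt_phi : 1 < phi := by unfold phi; nlinarith [sqrt5_gt]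
lemma phi_ne : phi ≠ 0 := ne_of_gt phi_pos
lemma phi_sq : phi ^ 2 = phi + 1 := by
  unfold phi; nlinarith [sqrt5_sq]
lemma psi_sq : psi ^ 2 = psi + 1 := by
  unfold psi; nlinarith [sqrt5_sq]
lemma phi_add_psi : phi + psi = 1 := by unfold phi psi; ring
lemma phi_mul_psi : phi * psi = -1 := by unfold phi psi; nlinarith [sqrt5_sq]
lemma psi_eq : psi = -phi⁻¹ := by
  field_simp [phi_ne]
  nlinarith [phi_mul_psi]
lemma psi_pow (i : ℕ) : psi ^ i = (-1) ^ i * phi ^ (-(i:ℤ)) := by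
  rw [psi_eq, neg_pow, zpow_neg, zpow_natCast, inv_pow]
lemma zpow_pos' (x : ℤ) : 0 < phi ^ x := zpow_pos phi_pos x
lemma phi_zpow_add_two (x : ℤ) : phi ^ (x+2) = phi ^ (x+1) + phi ^ x := by
  have h1 : phi ^ (x+2) = phi ^ x * phi ^ 2 := by
    rw [← zpow_natCast phi 2, ← zpow_add₀ phi_ne]; norm_num
  have h2 : phi ^ (x+1) = phi ^ x * phi := by
    rw [zpow_add₀ phi_ne, zpow_one]
  rw [h1, h2, phi_sq]; ring
lemma phi_zpow_mono {x y : ℤ} (h : x ≤ y) : phi ^ x ≤ phi ^ y :=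
  zpow_le_zpow_right₀ (le_of_lt one_lt_phi) h
lemma fib_mul_phi (i : ℕ) : (Nat.fib i : ℝ) * phi = (Nat.fib (i+1) : ℝ) - psi ^ i := by
  induction i using Nat.twoStepInduction with
  | zero => simp
  | one => simp [Nat.fib_one, Nat.fib_add_two, pow_one]; linarith [phi_add_psi]
  | more n ih1 ih2 =>
    have h1 : (Nat.fib (n+2) : ℝ) = Nat.fib (n+1) + Nat.fib n := by
      rw [Nat.fib_add_two]; push_cast; ring
    have h2 : (Nat.fib (n+2+1) : ℝ) = Nat.fib (n+1+1) + Nat.fib (n+1) := by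
      rw [Nat.fib_add_two]; push_cast; ring
    have h3 : psi ^ (n+2) = psi ^ (n+1) + psi ^ n := by
      have : psi ^ (n+2) = psi ^ n * psi ^ 2 := by ring
      rw [this, psi_sq]; ring
    rw [h1, h2, h3, add_mul, ih1, ih2]; ring

noncomputable def S (l : List ℕ) : ℝ := (l.map (fun i => psi ^ i)).sum

lemma neg_one_pow_split {a b : ℕ} (hab : a ≤ b) :
    ((-1:ℝ)) ^ b = (-1) ^ (b - a) * (-1) ^ a := by
  rw [← pow_add, Nat.sub_add_cancel hab]

lemma split_head (a b : ℕ) (t' : List ℕ) (hab : a ≤ b) :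
    (-1:ℝ) ^ a * S (a :: b :: t') =
      phi ^ (-(a:ℤ)) + (-1) ^ (b - a) * ((-1) ^ b * S (b :: t')) := by
  have hSa : S (a :: b :: t') = psi ^ a + S (b :: t') := by simp [S]
  have hpa : ((-1:ℝ)) ^ a * psi ^ a = phi ^ (-(a:ℤ)) := by
    rw [psi_pow]
    rcases Nat.even_or_odd a with h | h
    · rw [h.neg_one_pow]; ring
    · rw [h.neg_one_pow]; ring
  have hsplit : ((-1:ℝ)) ^ b = (-1) ^ (b - a) * (-1) ^ a := neg_one_pow_split hab
  rw [hSa, mul_add, hpa, hsplit]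
  have h2 : ((-1:ℝ)) ^ (b-a) * ((-1) ^ (b-a) * (-1) ^ a * S (b :: t'))
      = ((-1:ℝ)^(b-a))^2 * ((-1)^a * S (b::t')) := by ring
  rw [h2, ← pow_mul, pow_mul']
  simp

lemma key (l : List ℕ) (hne : l ≠ []) (hch : l.Chain' (fun x y => x + 2 ≤ y)) :
    phi ^ (-(l.headI:ℤ) - 1) < (-1) ^ l.headI * S l ∧
    (-1) ^ l.headI * S l < phi ^ (-(l.headI:ℤ) + 1) := by
  induction l with
  | nil => exact absurd rfl hne
  | cons a t ih =>
    simp only [List.headI]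
    have hSa : S (a :: t) = psi ^ a + S t := by simp [S]
    have hpa : ((-1:ℝ)) ^ a * psi ^ a = phi ^ (-(a:ℤ)) := by
      rw [psi_pow]
      rcases Nat.even_or_odd a with h | h
      · rw [h.neg_one_pow]; ring
      · rw [h.neg_one_pow]; ring
    cases t with
    | nil =>
      simp only [S, List.map_nil, List.sum_nil] at hSa ⊢
      rw [hSa, add_zero, hpa]
      constructor
      · exact zpow_lt_zpow_right₀ one_lt_phi (by linarith)
      · exact zpow_lt_zpow_right₀ one_lt_phi (by linarith)
    | cons b t' =>
      have hab : a + 2 ≤ b := (List.isChain_cons_cons.mp hch).1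
      have hcht : (b :: t').Chain' (fun x y => x + 2 ≤ y) := (List.isChain_cons_cons.mp hch).2
      obtain ⟨ih1, ih2⟩ := ih (by simp) hcht
      simp only [List.headI] at ih1 ih2
      set T := (-1:ℝ) ^ b * S (b :: t') with hT
      have hexp : (-1:ℝ) ^ a * S (a :: b :: t') = phi ^ (-(a:ℤ)) + (-1) ^ (b - a) * T :=
        split_head a b t' (by omega)
      rw [hexp]
      have key1 : phi ^ (-(a:ℤ)) + phi ^ (-(a:ℤ) - 1) = phi ^ (-(a:ℤ) + 1) := by
        have := phi_zpow_add_two (-(a:ℤ) - 1)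
        have e1 : -(a:ℤ) - 1 + 2 = -(a:ℤ) + 1 := by ring
        have e2 : -(a:ℤ) - 1 + 1 = -(a:ℤ) := by ring
        rw [e1, e2] at this; linarith
      have key2 : phi ^ (-(a:ℤ)) - phi ^ (-(a:ℤ) - 2) = phi ^ (-(a:ℤ) - 1) := by
        have := phi_zpow_add_two (-(a:ℤ) - 2)
        have e1 : -(a:ℤ) - 2 + 2 = -(a:ℤ) := by ring
        have e2 : -(a:ℤ) - 2 + 1 = -(a:ℤ) - 1 := by ring
        rw [e1, e2] at this; linarith
      rcases Nat.even_or_odd (b - a) with hpar | hpar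
      · rw [hpar.neg_one_pow, one_mul]
        have hub : phi ^ (-(b:ℤ) + 1) ≤ phi ^ (-(a:ℤ) - 1) := phi_zpow_mono (by omega)
        have hlb : 0 < T := lt_trans (zpow_pos' _) ih1
        constructor
        · have : phi ^ (-(a:ℤ) - 1) < phi ^ (-(a:ℤ)) := zpow_lt_zpow_right₀ one_lt_phi (by omega)
          linarith
        · linarith
      · rw [hpar.neg_one_pow]
        have hb3 : a + 3 ≤ b := by
          rcases hpar with ⟨c, hc⟩; omega
        have hub : phi ^ (-(b:ℤ) + 1) ≤ phi ^ (-(a:ℤ) - 2) := phi_zpow_mono (by omega)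
        have hlb : 0 < T := lt_trans (zpow_pos' _) ih1
        constructor
        · linarith
        · have : phi ^ (-(a:ℤ)) < phi ^ (-(a:ℤ) + 1) := zpow_lt_zpow_right₀ one_lt_phi (by omega)
          linarith

lemma bridge (l : List ℕ) :
    ((l.map Nat.fib).sum : ℝ) * phi = ((l.map (fun i => Nat.fib (i+1))).sum : ℝ) - S l := by
  induction l with
  | nil => simp [S]
  | cons a t ih =>
    simp only [List.map_cons, List.sum_cons, S, List.map_cons, List.sum_cons] at *
    push_cast
    push_cast at ih
    rw [add_mul, fib_mul_phi, ih]
    ring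

lemma phi_inv_add : phi ^ (-1:ℤ) + phi ^ (-2:ℤ) = 1 := by
  have h := phi_zpow_add_two (-2)
  have e1 : (-2:ℤ) + 2 = 0 := by ring
  have e2 : (-2:ℤ) + 1 = -1 := by ring
  rw [e1, e2, zpow_zero] at h
  linarith

lemma dist_lt_iff (m : ℕ) (hm : 2 < m) (N : ℤ) (x E : ℝ) (hx : x = N - E)
    (hE : |E| < phi ^ (-1:ℤ)) :
    distNearestInt x < phi ^ (-(m:ℤ)) ↔ |E| < phi ^ (-(m:ℤ)) := by
  have hm2 : phi ^ (-(m:ℤ)) < phi ^ (-2:ℤ) := zpow_lt_zpow_right₀ one_lt_phi (by omega)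
  have h21 : phi ^ (-2:ℤ) < phi ^ (-1:ℤ) := zpow_lt_zpow_right₀ one_lt_phi (by omega)
  have hhalf : phi ^ (-2:ℤ) < 1/2 := by
    -- phi^{-1} < 2 * phi^{-2} would be wrong; need phi^{-2} < 1/2 i.e. 2 < phi^2
    have h2 : (2:ℝ) < phi ^ 2 := by nlinarith [one_lt_phi, phi_sq]
    have hp : (0:ℝ) < phi ^ 2 := by positivity
    have : phi ^ (-2:ℤ) = (phi ^ 2)⁻¹ := by
      rw [zpow_neg, zpow_two]; norm_num [pow_two]
    rw [this]
    rw [inv_lt_iff_one_lt_mul₀ hp]; linarith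
  constructor
  · intro hdist
    have hroundN : round x = N := by
      have h1 : |x - N| = |E| := by rw [hx]; simp [abs_sub_comm]
      have h2 : |x - (round x : ℝ)| < phi ^ (-(m:ℤ)) := hdist
      have h3 : |((N - round x : ℤ) : ℝ)| < 1 := by
        push_cast
        have : ((N:ℝ) - round x) = (N - x) + (x - round x) := by ring
        rw [this]
        calc |((N:ℝ) - x) + (x - round x)| ≤ |(N:ℝ) - x| + |x - round x| := abs_add_le _ _
          _ < phi ^ (-1:ℤ) + phi ^ (-2:ℤ) := by
              rw [abs_sub_comm]; rw [h1] at *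
              linarith
          _ = 1 := phi_inv_add
      have h4 : |(N - round x : ℤ)| < 1 := by
        have : ((|N - round x| : ℤ) : ℝ) < ((1:ℤ):ℝ) := by push_cast; push_cast at h3; exact h3
        exact_mod_cast this
      rw [abs_lt] at h4
      omega
    unfold distNearestInt at hdist
    rw [hroundN] at hdist
    rwa [hx, show (N:ℝ) - E - N = -E by ring, abs_neg] at hdist
  · intro hE'
    have hEhalf : |E| < 1/2 := by linarith
    have hround : round x = N := by
      rw [hx, show (N:ℝ) - E = -E + N by ring, round_add_intCast]
      have : round (-E) = 0 := by
        rw [round_eq_zero_iff]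
        constructor
        · have := abs_lt.mp hEhalf; linarith [this.2]
        · have := abs_lt.mp hEhalf; linarith [this.1]
      omega
    unfold distNearestInt
    rw [hround, hx, show (N:ℝ) - E - N = -E by ring, abs_neg]
    exact hE'


set_option linter.unusedVariables false in
/-- Lemma 1: let `m > 2` and let `n` be a positive natural number with Zeckendorf
representation `n = F i₁ + ⋯ + F i_k`.  Then `‖n·φ‖ < φ^(−m)` if and only if either
(I) `i₁ ≥ m + 1`, or (II) `k ≥ 2`, `i₁ = m` and `i₂ − m` is odd. -/
theorem lemma_one (m : ℕ) (hm : 2 < m) (n : ℕ) (hn : 0 < n) (l : List ℕ)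
    (hl : IsZeckendorfRep n l) :
    distNearestInt ((n : ℝ) * phi) < phi ^ (-(m : ℤ)) ↔
      (m + 1 ≤ l.headI ∨ (2 ≤ l.length ∧ l.headI = m ∧ Odd (l.tail.headI - m))) := by
  obtain ⟨hne, hhead, hch, hsum⟩ := hl
  obtain ⟨a, t, rfl⟩ : ∃ a t, l = a :: t := by
    cases l with
    | nil => exact absurd rfl hne
    | cons a t => exact ⟨a, t, rfl⟩
  simp only [List.headI, List.tail_cons] at hhead ⊢
  set E : ℝ := S (a :: t) with hE
  set N : ℤ := ((((a :: t).map (fun i => Nat.fib (i+1))).sum : ℕ) : ℤ) with hN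
  have hx : (n : ℝ) * phi = (N : ℝ) - E := by
    have hb := bridge (a :: t)
    rw [hsum] at hb
    have hNr : (N:ℝ) = (((a :: t).map (fun i => Nat.fib (i+1))).sum : ℕ) := by
      rw [hN]; exact Int.cast_natCast _
    rw [hb, hE, hNr]
  obtain ⟨kb1, kb2⟩ := key (a :: t) (by simp) hch
  simp only [List.headI] at kb1 kb2
  have hPpos : 0 < (-1:ℝ) ^ a * E := lt_trans (zpow_pos' _) kb1
  have habs : |E| = (-1:ℝ) ^ a * E := by
    have h1 : |(-1:ℝ) ^ a * E| = |E| := by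
      rw [abs_mul, abs_pow, abs_neg, abs_one, one_pow, one_mul]
    rw [← h1, abs_of_pos hPpos]
  have hE1 : |E| < phi ^ (-1:ℤ) := by
    rw [habs]
    calc (-1:ℝ) ^ a * E < phi ^ (-(a:ℤ) + 1) := kb2
      _ ≤ phi ^ (-1:ℤ) := phi_zpow_mono (by omega)
  rw [dist_lt_iff m hm N _ E hx hE1]
  rcases Nat.lt_or_ge a m with hlt | hge
  · -- a < m : both sides false
    apply iff_of_false
    · push_neg
      refine le_of_lt ?_
      calc phi ^ (-(m:ℤ)) ≤ phi ^ (-(a:ℤ) - 1) := phi_zpow_mono (by omega)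
        _ < (-1:ℝ) ^ a * E := kb1
        _ = |E| := habs.symm
    · rintro (h | ⟨_, h, _⟩) <;> omega
  · rcases Nat.eq_or_lt_of_le hge with heq | hgt
    swap
    · -- m + 1 ≤ a : both sides true
      apply iff_of_true
      · rw [habs]
        calc (-1:ℝ) ^ a * E < phi ^ (-(a:ℤ) + 1) := kb2
          _ ≤ phi ^ (-(m:ℤ)) := phi_zpow_mono (by omega)
      · exact Or.inl (by omega)
    · -- a = m
      subst heq
      cases t with
      | nil =>
        apply iff_of_false
        · push_neg
          have hEm : E = psi ^ m := by simp [hE, S]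
          rw [hEm, psi_pow, abs_mul, abs_pow, abs_neg, abs_one, one_pow, one_mul,
            abs_of_pos (zpow_pos' _)]
        · rintro (h | ⟨h, _, _⟩) <;> simp at h <;> omega
      | cons b t' =>
        have hab : m + 2 ≤ b := (List.isChain_cons_cons.mp hch).1
        have hcht : (b :: t').Chain' (fun x y => x + 2 ≤ y) := (List.isChain_cons_cons.mp hch).2
        obtain ⟨ih1, ih2⟩ := key (b :: t') (by simp) hcht
        simp only [List.headI] at ih1 ih2
        set T := (-1:ℝ) ^ b * S (b :: t') with hT
        have hTpos : 0 < T := lt_trans (zpow_pos' _) ih1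
        have hexp : (-1:ℝ) ^ m * E = phi ^ (-(m:ℤ)) + (-1) ^ (b - m) * T :=
          split_head m b t' (by omega)
        rcases Nat.even_or_odd (b - m) with hpar | hpar
        · apply iff_of_false
          · push_neg
            rw [habs, hexp, hpar.neg_one_pow, one_mul]
            linarith [zpow_pos' (-(m:ℤ))]
          · rintro (h | ⟨_, _, h⟩)
            · omega
            · simp only [List.headI] at h
              exact (Nat.not_odd_iff_even.mpr hpar) h
        · apply iff_of_true
          · rw [habs, hexp, hpar.neg_one_pow]
            linarith
          · exact Or.inr ⟨by simp, rfl, hpar⟩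
end

section
/- Let φ = (1+√5)/2 and let m ≥ 1 be an integer. If (i₁,…,i_k) is a strictly increasing tuple of integers with k ≥ 1, i₁ ≥ m + 1, and i_{j+1} ≥ i_j + 2 for all j, and n = F_{i₁} + ⋯ + F_{i_k}, then ‖n·φ‖ < φ^{−m}. -/
open Real

lemma phi_eq_gold : phi = goldenRatio := rfl

lemma distNearestInt_le (x : ℝ) (N : ℤ) : distNearestInt x ≤ |x - N| := by
  unfold distNearestInt
  rcases eq_or_ne N (round x) with h | h
  · rw [h]
  · have h1 : (1 : ℝ) ≤ |(N : ℝ) - round x| := by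
      rw [show ((N : ℝ) - round x) = ((N - round x : ℤ) : ℝ) by push_cast; ring]
      rw [← Int.cast_abs]
      exact_mod_cast Int.one_le_abs (sub_ne_zero.mpr h)
    have h2 : |x - round x| ≤ 1 / 2 := abs_sub_round x
    have h3 : |(N : ℝ) - round x| ≤ |x - N| + |x - round x| := by
      calc |(N : ℝ) - round x| = |(x - round x) - (x - N)| := by ring_nf
        _ ≤ |x - round x| + |x - N| := abs_sub _ _
        _ = |x - N| + |x - round x| := by ring
    linarith

lemma inv_gold_eq : goldenRatio⁻¹ = goldenRatio - 1 := by
  have h1 : goldenRatio * (goldenRatio - 1) = 1 := by nlinarith [goldenRatio_sq]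
  exact inv_eq_of_mul_eq_one_right h1

lemma one_add_inv_gold : 1 + goldenRatio⁻¹ = goldenRatio := by
  rw [inv_gold_eq]; ring

/-- Key identity: n·φ - N = -∑ ψ^i where N = ∑ fib(i+1). -/
lemma sum_fib_mul_phi (l : List ℕ) :
    ((l.map Nat.fib).sum : ℝ) * phi - ((l.map (fun i => Nat.fib (i + 1))).sum : ℝ)
      = -(l.map (fun i => goldenConj ^ i)).sum := by
  induction l with
  | nil => simp
  | cons a t ih =>
    have key := fib_succ_sub_goldenRatio_mul_fib a
    simp only [List.map_cons, List.sum_cons]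
    push_cast
    push_cast at ih
    rw [phi_eq_gold] at ih ⊢
    nlinarith [ih, key]

/-- |∑ ψ^i| ≤ ∑ (φ⁻¹)^i. -/
lemma abs_sum_conj (l : List ℕ) :
    |(l.map (fun i => goldenConj ^ i)).sum| ≤ (l.map (fun i => goldenRatio⁻¹ ^ i)).sum := by
  induction l with
  | nil => simp
  | cons a t ih =>
    simp only [List.map_cons, List.sum_cons]
    have h1 : |goldenConj ^ a| = goldenRatio⁻¹ ^ a := by
      rw [abs_pow, inv_goldenRatio, abs_of_nonpos (le_of_lt goldenConj_neg)]
    calc |goldenConj ^ a + (t.map (fun i => goldenConj ^ i)).sum|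
        ≤ |goldenConj ^ a| + |(t.map (fun i => goldenConj ^ i)).sum| := abs_add_le _ _
      _ ≤ goldenRatio⁻¹ ^ a + (t.map (fun i => goldenRatio⁻¹ ^ i)).sum := by
          rw [h1]; linarith

/-- Geometric-type bound on the sum. -/
lemma sum_bound (l : List ℕ) (hchain : l.Chain' (fun a b => a + 2 ≤ b)) (c : ℕ)
    (hc : 1 ≤ c) (hhead : c ≤ l.headI) (hne : l ≠ []) :
    (l.map (fun i => goldenRatio⁻¹ ^ i)).sum < goldenRatio⁻¹ ^ (c - 1) := by
  induction l generalizing c with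
  | nil => exact absurd rfl hne
  | cons a t ih =>
    have hr0 : (0 : ℝ) < goldenRatio⁻¹ := inv_pos.mpr goldenRatio_pos
    have hr1 : goldenRatio⁻¹ < 1 := inv_lt_one_of_one_lt₀ one_lt_goldenRatio
    simp only [List.headI] at hhead
    have ha : goldenRatio⁻¹ ^ a ≤ goldenRatio⁻¹ ^ c :=
      pow_le_pow_of_le_one hr0.le hr1.le hhead
    have hd : c - 1 + 1 = c := Nat.succ_pred_eq_of_pos hc
    have h2 : goldenRatio⁻¹ + goldenRatio⁻¹ * goldenRatio⁻¹ = 1 := by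
      have h1 : goldenRatio⁻¹ * goldenRatio = 1 := inv_mul_cancel₀ goldenRatio_ne_zero
      nlinarith [one_add_inv_gold]
    have hstep0 : ∀ d : ℕ, goldenRatio⁻¹ ^ (d + 1) + goldenRatio⁻¹ ^ (d + 2) = goldenRatio⁻¹ ^ d := by
      intro d
      rw [pow_succ, show d + 2 = d + 1 + 1 from rfl, pow_succ, pow_succ]
      linear_combination (goldenRatio⁻¹ ^ d) * h2
    have hstep : goldenRatio⁻¹ ^ c + goldenRatio⁻¹ ^ (c + 1) = goldenRatio⁻¹ ^ (c - 1) := by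
      have := hstep0 (c - 1)
      rw [hd] at this
      rw [show c + 1 = c - 1 + 2 by omega]
      exact this
    cases t with
    | nil =>
      simp only [List.map_cons, List.map_nil, List.sum_cons, List.sum_nil, add_zero]
      have : goldenRatio⁻¹ ^ c < goldenRatio⁻¹ ^ (c - 1) :=
        pow_lt_pow_right_of_lt_one₀ hr0 hr1 (by omega)
      linarith
    | cons b t' =>
      have hab : a + 2 ≤ b := (List.isChain_cons_cons.mp hchain).1
      have hchain' : (b :: t').Chain' (fun a b => a + 2 ≤ b) := (List.isChain_cons_cons.mp hchain).2
      have hb : c + 2 ≤ (b :: t').headI := le_trans (by omega) hab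
      have iht := ih hchain' (c + 2) (by omega) hb (by simp)
      have hcc : c + 2 - 1 = c + 1 := rfl
      rw [hcc] at iht
      simp only [List.map_cons, List.sum_cons] at iht ⊢
      linarith

/-- Let `m ≥ 1`.  If `(i₁, …, i_k)` is a strictly increasing tuple of integers with `k ≥ 1`,
`i₁ ≥ m + 1`, consecutive entries differing by at least 2, and `n = F i₁ + ⋯ + F i_k`, then
`‖n·φ‖ < φ^(−m)`. -/
theorem dist_lt_of_head_ge (m : ℕ) (hm : 1 ≤ m) (l : List ℕ) (hne : l ≠ [])
    (hhead : m + 1 ≤ l.headI) (hchain : l.Chain' (fun a b => a + 2 ≤ b))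
    (n : ℕ) (hn : n = (l.map Nat.fib).sum) :
    distNearestInt ((n : ℝ) * phi) < phi ^ (-(m : ℤ)) := by
  set N : ℕ := (l.map (fun i => Nat.fib (i + 1))).sum with hN
  have key : (n : ℝ) * phi - (N : ℝ) = -(l.map (fun i => goldenConj ^ i)).sum := by
    rw [hn]; exact sum_fib_mul_phi l
  have habs : |(n : ℝ) * phi - (N : ℝ)| ≤ (l.map (fun i => goldenRatio⁻¹ ^ i)).sum := by
    rw [key, abs_neg]; exact abs_sum_conj l
  have hbound : (l.map (fun i => goldenRatio⁻¹ ^ i)).sum < goldenRatio⁻¹ ^ m := by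
    have := sum_bound l hchain (m + 1) (by omega) hhead hne
    simpa using this
  have hle : distNearestInt ((n : ℝ) * phi) ≤ |(n : ℝ) * phi - (N : ℝ)| := by
    have := distNearestInt_le ((n : ℝ) * phi) (N : ℤ)
    simpa using this
  have hfinal : phi ^ (-(m : ℤ)) = goldenRatio⁻¹ ^ m := by
    rw [phi_eq_gold, zpow_neg, zpow_natCast, inv_pow]
  rw [hfinal]
  linarith
end

section
/- Let φ = (1+√5)/2 and F the Fibonacci sequence with F₁ = F₂ = 1. Let m ≥ 2 be an integer and let (i₁,…,i_k) be a strictly increasing tuple of integers with k ≥ 1, i₁ ≥ 0, and i_{j+1} ≥ i_j + 2 for all j. Set S = F_{m+i₁} + ⋯ + F_{m+i_k} and φ_{I₀} = φ^{i₁} + ⋯ + φ^{i_k}. Then φ_{I₀}^{−1}·(1 − φ^{−2m})/(1 + φ^{−2m}) < F_m / S < φ_{I₀}^{−1}·(1 + φ^{−2m})/(1 − φ^{−2m}). -/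
lemma poly_core (X Y e f : ℝ) (hX : 4 < X) (hY : 1 ≤ Y)
    (he : e = 1 ∨ e = -1) (hf : f = 1 ∨ f = -1) (hf' : f = 1 ∨ 1 < Y) :
    (X - 1) * Y * (X - e) < (X + 1) * (X * Y - e * f) ∧
    (X - 1) * (X * Y - e * f) < (X + 1) * Y * (X - e) := by
  rcases hf with rfl | rfl
  · rcases he with rfl | rfl <;> constructor <;> nlinarith
  · have hY1 : 1 < Y := hf'.resolve_left (by norm_num)
    rcases he with rfl | rfl <;> constructor <;> nlinarith

lemma psi_pow_s9 (n : ℕ) : Real.goldenConj ^ n = (-1) ^ n * (Real.goldenRatio ^ n)⁻¹ := by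
  have h : Real.goldenConj = -Real.goldenRatio⁻¹ := by rw [Real.inv_goldenRatio]; ring
  rw [h, neg_pow, inv_pow]

lemma binet' (n : ℕ) :
    (Nat.fib n : ℝ) * (Real.sqrt 5 * Real.goldenRatio ^ n) =
      (Real.goldenRatio ^ n) ^ 2 - (-1) ^ n := by
  have h5 : Real.sqrt 5 ≠ 0 := by positivity
  have hg : Real.goldenRatio ^ n ≠ 0 := pow_ne_zero _ Real.goldenRatio_ne_zero
  rw [Real.coe_fib_eq n, psi_pow_s9]
  field_simp

lemma term_bounds (m i : ℕ) (hm : 2 ≤ m) :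
    (1 - phi ^ (-(2 * m : ℤ))) * phi ^ i * (Nat.fib m : ℝ) <
      (1 + phi ^ (-(2 * m : ℤ))) * (Nat.fib (m + i) : ℝ) ∧
    (1 - phi ^ (-(2 * m : ℤ))) * (Nat.fib (m + i) : ℝ) <
      (1 + phi ^ (-(2 * m : ℤ))) * phi ^ i * (Nat.fib m : ℝ) := by
  have hphig : phi = Real.goldenRatio := rfl
  set A : ℝ := Real.goldenRatio ^ m with hA
  set B : ℝ := Real.goldenRatio ^ i with hB
  set e : ℝ := (-1 : ℝ) ^ m with heq
  set f : ℝ := (-1 : ℝ) ^ i with hfq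
  have hgold1 : (1 : ℝ) < Real.goldenRatio := Real.one_lt_goldenRatio
  have hA2 : 2 < A := by
    have h1 : Real.goldenRatio ^ 2 ≤ A := pow_le_pow_right₀ hgold1.le hm
    nlinarith [Real.goldenRatio_sq]
  have hApos : 0 < A := by linarith
  have hBpos : 0 < B := pow_pos Real.goldenRatio_pos i
  have hB1 : 1 ≤ B := one_le_pow₀ hgold1.le
  have hX : 4 < A ^ 2 := by nlinarith
  have hXpos : 0 < A ^ 2 := by nlinarith
  have hc : phi ^ (-(2 * m : ℤ)) = (A ^ 2)⁻¹ := by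
    rw [hphig, show ((2 * m : ℤ)) = ((2 * m : ℕ) : ℤ) by push_cast; ring,
      zpow_neg, zpow_natCast, pow_mul']
  have he : e = 1 ∨ e = -1 := by
    rcases Nat.even_or_odd m with h | h
    · exact Or.inl (h.neg_one_pow)
    · exact Or.inr (h.neg_one_pow)
  have hf : f = 1 ∨ f = -1 := by
    rcases Nat.even_or_odd i with h | h
    · exact Or.inl (h.neg_one_pow)
    · exact Or.inr (h.neg_one_pow)
  have hf' : f = 1 ∨ 1 < B ^ 2 := by
    rcases Nat.even_or_odd i with h | h
    · exact Or.inl (h.neg_one_pow)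
    · right
      have hi1 : 1 ≤ i := h.pos
      have : Real.goldenRatio ^ 1 ≤ B := pow_le_pow_right₀ hgold1.le hi1
      nlinarith
  have hY : (1 : ℝ) ≤ B ^ 2 := by nlinarith
  have poly := poly_core (A ^ 2) (B ^ 2) e f hX hY he hf hf'
  have h5 : (0 : ℝ) < Real.sqrt 5 := by positivity
  have hFm := binet' m
  have hFmi := binet' (m + i)
  rw [pow_add] at hFmi
  rw [← hA, ← hB] at hFmi
  rw [← hA] at hFm
  rw [show ((-1 : ℝ)) ^ (m + i) = e * f by rw [heq, hfq, pow_add]] at hFmi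
  rw [show ((-1 : ℝ)) ^ m = e from rfl] at hFm
  have hsABpos : (0 : ℝ) < Real.sqrt 5 * A * B := by positivity
  have key1 : (A ^ 2 - 1) * B * (Nat.fib m : ℝ) < (A ^ 2 + 1) * (Nat.fib (m + i) : ℝ) := by
    refine lt_of_mul_lt_mul_right ?_ hsABpos.le
    have e1 : (A ^ 2 - 1) * B * (Nat.fib m : ℝ) * (Real.sqrt 5 * A * B)
        = (A ^ 2 - 1) * B ^ 2 * (A ^ 2 - e) := by
      linear_combination ((A ^ 2 - 1) * B ^ 2) * hFm
    have e2 : (A ^ 2 + 1) * (Nat.fib (m + i) : ℝ) * (Real.sqrt 5 * A * B)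
        = (A ^ 2 + 1) * (A ^ 2 * B ^ 2 - e * f) := by
      linear_combination (A ^ 2 + 1) * hFmi
    rw [e1, e2]
    exact poly.1
  have key2 : (A ^ 2 - 1) * (Nat.fib (m + i) : ℝ) < (A ^ 2 + 1) * B * (Nat.fib m : ℝ) := by
    refine lt_of_mul_lt_mul_right ?_ hsABpos.le
    have e1 : (A ^ 2 - 1) * (Nat.fib (m + i) : ℝ) * (Real.sqrt 5 * A * B)
        = (A ^ 2 - 1) * (A ^ 2 * B ^ 2 - e * f) := by
      linear_combination (A ^ 2 - 1) * hFmi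
    have e2 : (A ^ 2 + 1) * B * (Nat.fib m : ℝ) * (Real.sqrt 5 * A * B)
        = (A ^ 2 + 1) * B ^ 2 * (A ^ 2 - e) := by
      linear_combination ((A ^ 2 + 1) * B ^ 2) * hFm
    rw [e1, e2]
    exact poly.2
  rw [hc, hphig, ← hB]
  constructor
  · refine lt_of_mul_lt_mul_right ?_ hXpos.le
    have e1 : (1 - (A ^ 2)⁻¹) * B * (Nat.fib m : ℝ) * A ^ 2
        = (A ^ 2 - 1) * B * (Nat.fib m : ℝ) := by
      field_simp
    have e2 : (1 + (A ^ 2)⁻¹) * (Nat.fib (m + i) : ℝ) * A ^ 2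
        = (A ^ 2 + 1) * (Nat.fib (m + i) : ℝ) := by
      field_simp
    rw [e1, e2]; exact key1
  · refine lt_of_mul_lt_mul_right ?_ hXpos.le
    have e1 : (1 - (A ^ 2)⁻¹) * (Nat.fib (m + i) : ℝ) * A ^ 2
        = (A ^ 2 - 1) * (Nat.fib (m + i) : ℝ) := by
      field_simp
    have e2 : (1 + (A ^ 2)⁻¹) * B * (Nat.fib m : ℝ) * A ^ 2
        = (A ^ 2 + 1) * B * (Nat.fib m : ℝ) := by
      field_simp
    rw [e1, e2]; exact key2

lemma sum_bounds (m : ℕ) (hm : 2 ≤ m) :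
    ∀ l : List ℕ, l ≠ [] →
    (1 - phi ^ (-(2 * m : ℤ))) * (l.map (fun i => phi ^ i)).sum * (Nat.fib m : ℝ) <
      (1 + phi ^ (-(2 * m : ℤ))) * (l.map (fun i => (Nat.fib (m + i) : ℝ))).sum ∧
    (1 - phi ^ (-(2 * m : ℤ))) * (l.map (fun i => (Nat.fib (m + i) : ℝ))).sum <
      (1 + phi ^ (-(2 * m : ℤ))) * (l.map (fun i => phi ^ i)).sum * (Nat.fib m : ℝ) := by
  intro l
  induction l with
  | nil => intro h; exact absurd rfl h
  | cons a t ih =>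
    intro _
    have h2 := term_bounds m a hm
    by_cases ht : t = []
    · subst ht
      simp only [List.map_cons, List.map_nil, List.sum_cons, List.sum_nil, add_zero]
      exact h2
    · have h1 := ih ht
      simp only [List.map_cons, List.sum_cons]
      constructor
      · nlinarith [h1.1, h2.1]
      · nlinarith [h1.2, h2.2]


/-- Let `m ≥ 2` and let `(i₁, …, i_k)` be a strictly increasing tuple of integers with
`k ≥ 1`, `i₁ ≥ 0`, and consecutive entries differing by at least 2.  Set
`S = F (m+i₁) + ⋯ + F (m+i_k)` and `φ_I₀ = φ^i₁ + ⋯ + φ^i_k`.  Then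
`φ_I₀⁻¹·(1 − φ^(−2m))/(1 + φ^(−2m)) < F m / S < φ_I₀⁻¹·(1 + φ^(−2m))/(1 − φ^(−2m))`. -/
theorem fib_sum_ratio_bounds (m : ℕ) (hm : 2 ≤ m) (l : List ℕ) (hne : l ≠ [])
    (hchain : l.Chain' (fun a b => a + 2 ≤ b))
    (S : ℝ) (hS : S = ((l.map (fun i => Nat.fib (m + i))).sum : ℕ))
    (phiI : ℝ) (hphiI : phiI = (l.map (fun i => phi ^ i)).sum) :
    phiI⁻¹ * (1 - phi ^ (-(2 * m : ℤ))) / (1 + phi ^ (-(2 * m : ℤ))) <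
      (Nat.fib m : ℝ) / S ∧
    (Nat.fib m : ℝ) / S <
      phiI⁻¹ * (1 + phi ^ (-(2 * m : ℤ))) / (1 - phi ^ (-(2 * m : ℤ))) := by
  have hgpos : (0 : ℝ) < phi := Real.goldenRatio_pos
  have hg1 : (1 : ℝ) < phi := Real.one_lt_goldenRatio
  set c : ℝ := phi ^ (-(2 * m : ℤ)) with hcdef
  have hc0 : 0 < c := zpow_pos hgpos _
  have hc1 : c < 1 := by
    apply zpow_lt_one_of_neg₀ hg1
    omega
  have hSr : S = (l.map (fun i => (Nat.fib (m + i) : ℝ))).sum := by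
    rw [hS, Nat.cast_list_sum, List.map_map]
    rfl
  have hsum := sum_bounds m hm l hne
  rw [← hSr, ← hphiI] at hsum
  have hphiIpos : 0 < phiI := by
    rw [hphiI]
    apply List.sum_pos
    · intro x hx
      simp only [List.mem_map] at hx
      obtain ⟨i, _, rfl⟩ := hx
      positivity
    · simpa using hne
  have hFpos : (0 : ℝ) < (Nat.fib m : ℝ) := by
    have : 0 < Nat.fib m := Nat.fib_pos.mpr (by omega)
    exact_mod_cast this
  have hSpos : 0 < S := by nlinarith [hsum.1]
  have hphiIne : phiI ≠ 0 := ne_of_gt hphiIpos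
  constructor
  · rw [div_lt_div_iff₀ (by linarith) hSpos]
    have h := mul_lt_mul_of_pos_left hsum.2 (inv_pos.2 hphiIpos)
    have hEq : phiI⁻¹ * ((1 + c) * phiI * (Nat.fib m : ℝ)) = (Nat.fib m : ℝ) * (1 + c) := by
      field_simp
    linarith [h, hEq.le, hEq.ge]
  · rw [div_lt_div_iff₀ hSpos (by linarith)]
    have h := mul_lt_mul_of_pos_left hsum.1 (inv_pos.2 hphiIpos)
    have hEq : phiI⁻¹ * ((1 - c) * phiI * (Nat.fib m : ℝ)) = (Nat.fib m : ℝ) * (1 - c) := by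
      field_simp
    linarith [h, hEq.le, hEq.ge]
end

section
/- Let φ = (1+√5)/2 and let M ≥ 2 be an integer. Then the family of real numbers φ_I^{−M} = (φ^{i₁} + ⋯ + φ^{i_k})^{−M}, indexed by all strictly increasing tuples I = (i₁,…,i_k) of integers with k ≥ 2, i₁ ≥ 0, and i_{j+1} ≥ i_j + 2 for all j, is summable (has finite sum). -/
/-- `Nfrak m` (𝔑(m)): the set of strictly increasing finite tuples `I = (i₁, …, i_k)` of
natural numbers, encoded as lists, with `k ≥ 2`, `i₁ ≥ m`, and `i_{j+1} ≥ i_j + 2`. -/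
def Nfrak (m : ℕ) : Set (List ℕ) :=
  {l | 2 ≤ l.length ∧ m ≤ l.headI ∧ l.Chain' (fun a b => a + 2 ≤ b)}

/-- For a tuple `I = (i₁, …, i_k)`, `φ_I := φ^i₁ + ⋯ + φ^i_k`. -/
noncomputable def phiI (l : List ℕ) : ℝ := (l.map (fun i => phi ^ i)).sum

lemma phi_gt : (3/2 : ℝ) < phi := by
  have h5 : (2:ℝ) < Real.sqrt 5 := by
    have : (2:ℝ) = Real.sqrt 4 := by
      rw [show (4:ℝ) = 2^2 by norm_num, Real.sqrt_sq (by norm_num)]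
    rw [this]
    exact Real.sqrt_lt_sqrt (by norm_num) (by norm_num)
  unfold phi; linarith

lemma half_lt_logb : (1/2 : ℝ) < Real.logb 2 phi := by
  rw [Real.lt_logb_iff_rpow_lt (by norm_num) phi_pos, ← Real.sqrt_eq_rpow]
  have : Real.sqrt 2 < 3/2 := by
    rw [show (3/2:ℝ) = Real.sqrt ((3/2)^2) by
      rw [Real.sqrt_sq (by norm_num)]]
    exact Real.sqrt_lt_sqrt (by norm_num) (by norm_num)
  linarith [phi_gt]

lemma sum_range_two_pow_lt (b : ℕ) : ∑ i ∈ Finset.range b, 2^i < 2^b := by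
  induction b with
  | zero => simp
  | succ b ih => rw [Finset.sum_range_succ, pow_succ]; omega

/-- For every integer `M ≥ 2`, the family `φ_I^(−M)` indexed by all strictly increasing
tuples `I` with `k ≥ 2`, `i₁ ≥ 0` and gaps at least 2 (i.e. `I ∈ 𝔑(0)`) is summable. -/
theorem summable_phiI_neg_pow (M : ℕ) (hM : 2 ≤ M) :
    Summable (fun l : Nfrak 0 => phiI l.1 ^ (-(M : ℤ))) := by
  set c : ℝ := Real.logb 2 phi with hc
  have hc2 : (2:ℝ) ^ c = phi := Real.rpow_logb (by norm_num) (by norm_num) phi_pos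
  have hchalf : (1/2:ℝ) < c := half_lt_logb
  have hcpos : 0 < c := by linarith
  have hMR : (2:ℝ) ≤ (M:ℝ) := by exact_mod_cast hM
  have hp : 1 < (M:ℝ) * c := by nlinarith
  -- every list in `Nfrak 0` is strictly sorted
  have hsorted : ∀ l : List ℕ, l ∈ Nfrak 0 → l.Pairwise (· < ·) := by
    intro l hl
    have h3 := hl.2.2
    have h4 : l.Chain' (· < ·) := h3.imp (fun a b h => by omega)
    exact List.isChain_iff_pairwise.mp h4
  -- the binary encoding is injective on `Nfrak 0`
  have hinj : Function.Injective
      (fun l : Nfrak 0 => (l.1.map (fun i => 2 ^ i)).sum) := by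
    intro l l' h
    apply Subtype.ext
    have h2 := congrArg Nat.bitIndices h
    rwa [Nat.bitIndices_twoPowsum (hsorted _ l.2).sortedLT,
      Nat.bitIndices_twoPowsum (hsorted _ l'.2).sortedLT] at h2
  have hg : Summable (fun n : ℕ => phi ^ M * (1 / (n:ℝ) ^ ((M:ℝ) * c))) :=
    (Real.summable_one_div_nat_rpow.mpr hp).mul_left _
  refine Summable.of_nonneg_of_le (fun l => ?_) (fun l => ?_) (hg.comp_injective hinj)
  · refine zpow_nonneg ?_ _
    exact List.sum_nonneg (by
      intro x hx
      obtain ⟨i, _, rfl⟩ := List.mem_map.mp hx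
      exact pow_nonneg (le_of_lt phi_pos) _)
  · obtain ⟨l, hl⟩ := l
    simp only [Function.comp_apply]
    set n : ℕ := (l.map (fun i => 2 ^ i)).sum with hn
    have hlen : 2 ≤ l.length := hl.1
    have hne : l ≠ [] := by intro h; rw [h] at hlen; simp at hlen
    have hnd : l.Nodup := (hsorted l hl).nodup
    have hsne : l.toFinset.Nonempty := by
      simp [List.toFinset_nonempty_iff, hne]
    set b : ℕ := l.toFinset.max' hsne with hb
    have hbl : b ∈ l := by
      have := l.toFinset.max'_mem hsne
      simpa using this
    have hle : ∀ i ∈ l, i ≤ b := by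
      intro i hi
      exact l.toFinset.le_max' i (by simpa using hi)
    -- lower bound on phiI
    have hphiIb : phi ^ b ≤ phiI l := by
      refine List.single_le_sum ?_ _ (List.mem_map_of_mem hbl)
      intro x hx
      obtain ⟨i, _, rfl⟩ := List.mem_map.mp hx
      exact pow_nonneg (le_of_lt phi_pos) _
    have hphiIpos : 0 < phiI l := lt_of_lt_of_le (pow_pos phi_pos b) hphiIb
    -- bounds on n
    have h2bn : 2 ^ b ≤ n := by
      refine List.single_le_sum (fun x _ => Nat.zero_le x) _
        (List.mem_map_of_mem hbl)
    have hn1 : 1 ≤ n := le_trans (Nat.one_le_two_pow) h2bn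
    have hnlt : n < 2 ^ (b+1) := by
      have heq : n = ∑ i ∈ l.toFinset, 2 ^ i := (List.sum_toFinset _ hnd).symm
      have hsub : l.toFinset ⊆ Finset.range (b+1) := by
        intro i hi
        simp only [Finset.mem_range, Nat.lt_succ_iff]
        exact hle i (by simpa using hi)
      calc n ≤ ∑ i ∈ Finset.range (b+1), 2 ^ i := by
              rw [heq]; exact Finset.sum_le_sum_of_subset hsub
        _ < 2 ^ (b+1) := sum_range_two_pow_lt _
    have hNpos : (0:ℝ) < (n:ℝ) := by exact_mod_cast hn1
    -- key: (n:ℝ)^c ≤ phi * phiI l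
    have hkey : (n:ℝ) ^ c ≤ phi * phiI l := by
      have h1 : (n:ℝ) ≤ 2 * 2 ^ b := by
        have : (n:ℝ) < (2:ℝ) ^ (b+1) := by exact_mod_cast hnlt
        rw [pow_succ, mul_comm] at this
        linarith
      have h2 : (n:ℝ) ^ c ≤ ((2:ℝ) * 2 ^ b) ^ c :=
        Real.rpow_le_rpow (le_of_lt hNpos) h1 (le_of_lt hcpos)
      have h3 : ((2:ℝ) * 2 ^ b) ^ c = (2:ℝ) ^ c * ((2:ℝ) ^ b) ^ c :=
        Real.mul_rpow (by norm_num) (by positivity)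
      have h4 : ((2:ℝ) ^ b) ^ c = phi ^ b := by
        rw [← hc2, ← Real.rpow_natCast (2:ℝ) b, ← Real.rpow_natCast ((2:ℝ) ^ c) b,
          ← Real.rpow_mul (by norm_num), ← Real.rpow_mul (by norm_num), mul_comm]
      calc (n:ℝ) ^ c ≤ (2:ℝ) ^ c * ((2:ℝ) ^ b) ^ c := by rw [← h3]; exact h2
        _ = phi * phi ^ b := by rw [hc2, h4]
        _ ≤ phi * phiI l := by
            exact mul_le_mul_of_nonneg_left hphiIb (le_of_lt phi_pos)
    -- conclude
    have hpowM : (n:ℝ) ^ ((M:ℝ) * c) ≤ phi ^ M * phiI l ^ M := by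
      have : (n:ℝ) ^ ((M:ℝ) * c) = ((n:ℝ) ^ c) ^ M := by
        rw [mul_comm, Real.rpow_mul (le_of_lt hNpos), Real.rpow_natCast]
      rw [this, ← mul_pow]
      exact pow_le_pow_left₀ (Real.rpow_nonneg (le_of_lt hNpos) _) hkey M
    have hNp : (0:ℝ) < (n:ℝ) ^ ((M:ℝ) * c) := Real.rpow_pos_of_pos hNpos _
    have hphiM : (0:ℝ) < phiI l ^ M := pow_pos hphiIpos M
    rw [zpow_neg, zpow_natCast, inv_eq_one_div, mul_one_div,
      div_le_div_iff₀ hphiM hNp, one_mul]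
    linarith
end

section
/- Let φ = (1+√5)/2, let M ≥ 1 and l ≥ 2 be integers. Then the sum of φ_I^{−M} over all strictly increasing tuples I = (i₁,…,i_l) of integers of length exactly l with i₁ ≥ 1 and i_{j+1} ≥ i_j + 2 for all j satisfies Σ φ_I^{−M} < φ^{−M(l−1)} / (φ^M − 1)^l. -/
def build : ℕ → List ℕ → List ℕ
  | _, [] => []
  | m, a :: c => (m + a) :: build (m + a + 2) c

def unbuild : ℕ → List ℕ → List ℕ
  | _, [] => []
  | m, i :: t => (i - m) :: unbuild (i + 2) t

lemma build_length : ∀ (c : List ℕ) (m : ℕ), (build m c).length = c.length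
  | [], _ => rfl
  | a :: c, m => by simp [build, build_length c]

lemma unbuild_length : ∀ (t : List ℕ) (m : ℕ), (unbuild m t).length = t.length
  | [], _ => rfl
  | i :: t, m => by simp [unbuild, unbuild_length t]

lemma unbuild_build : ∀ (c : List ℕ) (m : ℕ), unbuild m (build m c) = c
  | [], _ => rfl
  | a :: c, m => by simp [build, unbuild, unbuild_build c (m + a + 2)]

lemma build_chain : ∀ (c : List ℕ) (m : ℕ), (build m c).Chain' (fun a b => a + 2 ≤ b)
  | [], _ => by simp [build]; exact List.isChain_nil
  | [a], _ => by simp [build]; exact List.isChain_singleton _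
  | a :: b :: c, m => by
      have ih := build_chain (b :: c) (m + a + 2)
      simp only [build] at ih ⊢
      exact List.IsChain.cons_cons (by omega) ih

lemma build_unbuild : ∀ (t : List ℕ) (m : ℕ), m ≤ t.headI →
    t.Chain' (fun a b => a + 2 ≤ b) → build m (unbuild m t) = t
  | [], _, _, _ => rfl
  | [i], m, h, _ => by
      simp only [List.headI] at h
      simp [unbuild, build]; omega
  | i :: j :: t, m, h, hc => by
      simp only [List.headI] at h
      have h1 : m + (i - m) = i := by omega
      have hc1 : i + 2 ≤ j := (List.isChain_cons_cons.mp hc).1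
      have hc2 := (List.isChain_cons_cons.mp hc).2
      have ih := build_unbuild (j :: t) (i + 2) (by simpa using hc1) hc2
      show (m + (i - m)) :: build (m + (i - m) + 2) (unbuild (i + 2) (j :: t)) = i :: j :: t
      rw [h1, ih]

lemma getLastD_congr : ∀ {l : List ℕ}, l ≠ [] → ∀ (a b : ℕ), l.getLastD a = l.getLastD b
  | c :: l, _, a, b => by rw [List.getLastD_cons, List.getLastD_cons]

lemma build_getLastD : ∀ (c : List ℕ) (m : ℕ), c ≠ [] →
    (build m c).getLastD 0 = m + 2 * (c.length - 1) + c.sum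
  | [a], m, _ => by simp [build]
  | a :: b :: c, m, _ => by
      have ih := build_getLastD (b :: c) (m + a + 2) (by simp)
      have hne : build (m + a + 2) (b :: c) ≠ [] := by simp [build]
      have e1 : (build m (a :: b :: c)).getLastD 0
          = (build (m + a + 2) (b :: c)).getLastD (m + a) := rfl
      rw [e1, getLastD_congr hne (m + a) 0, ih]
      simp [List.length_cons, List.sum_cons]
      omega

lemma phiI_cons (a : ℕ) (t : List ℕ) : phiI (a :: t) = phi ^ a + phiI t := by simp [phiI]

lemma le_phiI : ∀ (t : List ℕ), t ≠ [] → phi ^ (t.getLastD 0) ≤ phiI t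
  | [a], _ => by simp [phiI, List.getLastD]
  | a :: b :: t, _ => by
      have ih := le_phiI (b :: t) (by simp)
      have h0 : (0:ℝ) < phi ^ a := pow_pos phi_pos a
      rw [phiI_cons, List.getLastD_cons, getLastD_congr (by simp : (b::t) ≠ ([]:List ℕ)) a 0]
      linarith

lemma lt_phiI (a : ℕ) (t : List ℕ) (h : t ≠ []) :
    phi ^ ((a :: t).getLastD 0) < phiI (a :: t) := by
  have h1 := le_phiI t h
  have h0 : (0:ℝ) < phi ^ a := pow_pos phi_pos a
  rw [phiI_cons, List.getLastD_cons, getLastD_congr h a 0]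
  linarith

lemma pointwise (M : ℕ) (hM : 1 ≤ M) (a b : ℕ) (t : List ℕ) :
    phiI (a :: b :: t) ^ (-(M : ℤ)) < ((phi ^ M)⁻¹) ^ ((a :: b :: t).getLastD 0) := by
  set k := (a :: b :: t).getLastD 0 with hk
  have h1 : phi ^ k < phiI (a :: b :: t) := lt_phiI a (b :: t) (by simp)
  have h2 : (0:ℝ) < phi ^ k := pow_pos phi_pos k
  have h3 : (phi ^ k) ^ M < phiI (a :: b :: t) ^ M :=
    pow_lt_pow_left₀ h1 h2.le (by omega)
  have h4 : (0:ℝ) < (phi ^ k) ^ M := pow_pos h2 M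
  have e1 : phiI (a :: b :: t) ^ (-(M:ℤ)) = (phiI (a :: b :: t) ^ M)⁻¹ := by
    rw [zpow_neg, zpow_natCast]
  have e2 : ((phi ^ M)⁻¹) ^ k = ((phi ^ k) ^ M)⁻¹ := by
    rw [inv_pow, ← pow_mul, ← pow_mul, Nat.mul_comm]
  rw [e1, e2]
  exact inv_strictAnti₀ h4 h3

lemma tsum_pi_geom (r : ℝ) (h0 : 0 ≤ r) (h1 : r < 1) (n : ℕ) :
    Summable (fun v : Fin n → ℕ => ∏ i, r ^ v i) ∧
      ∑' v : Fin n → ℕ, ∏ i, r ^ v i = ((1 - r)⁻¹) ^ n := by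
  induction n with
  | zero =>
      have hs : HasSum (fun v : Fin 0 → ℕ => ∏ i, r ^ v i) 1 := by
        have := hasSum_single (f := fun v : Fin 0 → ℕ => ∏ i, r ^ v i)
          (fun _ => 0) (fun b' hb' => absurd (Subsingleton.elim b' _) hb')
        simpa using this
      exact ⟨hs.summable, by simpa using hs.tsum_eq⟩
  | succ n ih =>
      obtain ⟨hs, ht⟩ := ih
      have hgeo : Summable (fun k : ℕ => r ^ k) := summable_geometric_of_lt_one h0 h1
      have hf' : (0 : ℕ → ℝ) ≤ fun k : ℕ => r ^ k := fun k => pow_nonneg h0 k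
      have hg' : (0 : (Fin n → ℕ) → ℝ) ≤ fun v : Fin n → ℕ => ∏ i, r ^ v i :=
        fun v => Finset.prod_nonneg fun i _ => pow_nonneg h0 _
      have hprod : Summable (fun p : ℕ × (Fin n → ℕ) => r ^ p.1 * ∏ i, r ^ p.2 i) :=
        Summable.mul_of_nonneg (f := fun k : ℕ => r ^ k)
          (g := fun v : Fin n → ℕ => ∏ i, r ^ v i) hgeo hs hf' hg'
      set e := (Fin.consEquiv (fun _ : Fin (n+1) => ℕ)).symm with he
      have hFeq : (fun v : Fin (n+1) → ℕ => ∏ i, r ^ v i)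
          = (fun p : ℕ × (Fin n → ℕ) => r ^ p.1 * ∏ i, r ^ p.2 i) ∘ e := by
        funext v
        simp only [Function.comp, he]
        rw [Fin.prod_univ_succ]
        rfl
      constructor
      · rw [hFeq]
        exact (Equiv.summable_iff e).mpr hprod
      · have e2 : ∑' v : Fin (n+1) → ℕ, ∏ i, r ^ v i
            = ∑' p : ℕ × (Fin n → ℕ), r ^ p.1 * ∏ i, r ^ p.2 i := by
          rw [← Equiv.tsum_eq e (fun p : ℕ × (Fin n → ℕ) => r ^ p.1 * ∏ i, r ^ p.2 i)]
          exact tsum_congr (fun v => congrFun hFeq v)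
        rw [e2, Summable.tsum_prod' hprod (fun b => hs.mul_left (r ^ b))]
        simp_rw [tsum_mul_left]
        rw [ht, tsum_mul_right, tsum_geometric_of_lt_one h0 h1, pow_succ]
        ring

def listEquiv (l : ℕ) (hl : 1 ≤ l) : (Fin l → ℕ) ≃
    {t : List ℕ // t.length = l ∧ 1 ≤ t.headI ∧ t.Chain' (fun a b => a + 2 ≤ b)} where
  toFun v := ⟨build 1 (List.ofFn v), by
    refine ⟨by simp [build_length], ?_, build_chain _ _⟩
    have hne : List.ofFn v ≠ [] := by
      intro h
      have := congrArg List.length h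
      simp at this
      omega
    obtain ⟨a, c, h⟩ := List.exists_cons_of_ne_nil hne
    rw [h]
    show 1 ≤ (1 + a)
    omega⟩
  invFun t := fun i => (unbuild 1 t.1).getD i 0
  left_inv v := by
    funext i
    simp only [unbuild_build]
    rw [List.getD_eq_getElem _ _ (by simp [i.isLt])]
    simp
  right_inv t := by
    apply Subtype.ext
    show build 1 (List.ofFn fun i => (unbuild 1 t.1).getD i 0) = t.1
    have hlen : (unbuild 1 t.1).length = l := by rw [unbuild_length, t.2.1]
    have heq : (List.ofFn fun i : Fin l => (unbuild 1 t.1).getD i 0) = unbuild 1 t.1 := by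
      apply List.ext_getElem (by simp [hlen])
      intro i h1 h2
      rw [List.getElem_ofFn]
      exact List.getD_eq_getElem _ _ h2
    rw [heq, build_unbuild t.1 1 t.2.2.1 t.2.2.2]

/-- Let `M ≥ 1` and `l ≥ 2`.  The sum of `φ_I^(−M)` over all strictly increasing tuples
`I = (i₁, …, i_l)` of length exactly `l`, with `i₁ ≥ 1` and consecutive entries differing
by at least 2, is finite and satisfies `Σ φ_I^(−M) < φ^(−M(l−1)) / (φ^M − 1)^l`. -/
theorem tsum_fixed_length_bound (M l : ℕ) (hM : 1 ≤ M) (hl : 2 ≤ l) :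
    Summable (fun t : {t : List ℕ // t.length = l ∧ 1 ≤ t.headI ∧
        t.Chain' (fun a b => a + 2 ≤ b)} => phiI t.1 ^ (-(M : ℤ))) ∧
    (∑' t : {t : List ℕ // t.length = l ∧ 1 ≤ t.headI ∧
        t.Chain' (fun a b => a + 2 ≤ b)}, phiI t.1 ^ (-(M : ℤ))) <
      phi ^ (-((M : ℤ) * ((l : ℤ) - 1))) / (phi ^ M - 1) ^ l := by
  have hl1 : 1 ≤ l := by omega
  have hq : 1 < phi ^ M := one_lt_pow₀ one_lt_phi (by omega)
  have hq0 : (0:ℝ) < phi ^ M := lt_trans one_pos hq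
  set r : ℝ := (phi ^ M)⁻¹ with hrdef
  have hr0 : 0 < r := inv_pos.mpr hq0
  have hr1 : r < 1 := inv_lt_one_of_one_lt₀ hq
  obtain ⟨hs, ht⟩ := tsum_pi_geom r hr0.le hr1 l
  set E := listEquiv l hl1 with hE
  have hgE : ∀ v : Fin l → ℕ, r ^ ((E v).1.getLastD 0) = r ^ (2 * l - 1) * ∏ i, r ^ v i := by
    intro v
    have hne : List.ofFn v ≠ [] := by
      intro h
      have := congrArg List.length h
      simp at this
      omega
    show r ^ ((build 1 (List.ofFn v)).getLastD 0) = _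
    rw [build_getLastD _ _ hne, List.length_ofFn, List.sum_ofFn]
    rw [show 1 + 2 * (l - 1) + ∑ i, v i = (2 * l - 1) + ∑ i, v i by omega]
    rw [pow_add, Finset.prod_pow_eq_pow_sum]
  have hgs : Summable (fun t : {t : List ℕ // t.length = l ∧ 1 ≤ t.headI ∧
      t.Chain' (fun a b => a + 2 ≤ b)} => r ^ (t.1.getLastD 0)) := by
    have hcomp : ((fun t : {t : List ℕ // t.length = l ∧ 1 ≤ t.headI ∧
        t.Chain' (fun a b => a + 2 ≤ b)} => r ^ (t.1.getLastD 0)) ∘ E)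
        = fun v : Fin l → ℕ => r ^ (2 * l - 1) * ∏ i, r ^ v i := funext hgE
    exact (Equiv.summable_iff E).mp (hcomp ▸ (hs.mul_left (r ^ (2 * l - 1))))
  have hgt : (∑' t : {t : List ℕ // t.length = l ∧ 1 ≤ t.headI ∧
      t.Chain' (fun a b => a + 2 ≤ b)}, r ^ (t.1.getLastD 0))
      = r ^ (2 * l - 1) * ((1 - r)⁻¹) ^ l := by
    rw [← Equiv.tsum_eq E (fun t => r ^ (t.1.getLastD 0))]
    rw [tsum_congr hgE, tsum_mul_left, ht]
  have hpt : ∀ t : {t : List ℕ // t.length = l ∧ 1 ≤ t.headI ∧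
      t.Chain' (fun a b => a + 2 ≤ b)}, phiI t.1 ^ (-(M : ℤ)) < r ^ (t.1.getLastD 0) := by
    rintro ⟨t, htl, hth, htc⟩
    cases t with
    | nil => simp at htl; omega
    | cons a t1 => cases t1 with
      | nil => simp at htl; omega
      | cons b t' => exact pointwise M hM a b t'
  have hfpos : ∀ t : {t : List ℕ // t.length = l ∧ 1 ≤ t.headI ∧
      t.Chain' (fun a b => a + 2 ≤ b)}, 0 < phiI t.1 ^ (-(M : ℤ)) := by
    rintro ⟨t, htl, _, _⟩
    have hne : t ≠ [] := by
      intro h; subst h; simp at htl; omega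
    have hpos : 0 < phiI t :=
      lt_of_lt_of_le (pow_pos phi_pos (t.getLastD 0)) (le_phiI t hne)
    exact zpow_pos hpos _
  have hfs : Summable (fun t : {t : List ℕ // t.length = l ∧ 1 ≤ t.headI ∧
      t.Chain' (fun a b => a + 2 ≤ b)} => phiI t.1 ^ (-(M : ℤ))) :=
    Summable.of_nonneg_of_le (fun t => (hfpos t).le) (fun t => (hpt t).le) hgs
  refine ⟨hfs, ?_⟩
  have hlt := Summable.tsum_lt_tsum (fun t => (hpt t).le) (hpt (E (fun _ => 0))) hfs hgs
  have hq0' : (phi ^ M : ℝ) ≠ 0 := ne_of_gt hq0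
  have h1q : (phi ^ M : ℝ) - 1 ≠ 0 := sub_ne_zero.mpr (ne_of_gt hq)
  have key : r ^ (2 * l - 1) * ((1 - r)⁻¹) ^ l
      = phi ^ (-((M : ℤ) * ((l : ℤ) - 1))) / (phi ^ M - 1) ^ l := by
    have hrhs : phi ^ (-((M : ℤ) * ((l : ℤ) - 1))) = ((phi ^ M) ^ (l - 1) : ℝ)⁻¹ := by
      have hcast : (-((M : ℤ) * ((l : ℤ) - 1))) = -((M * (l - 1) : ℕ) : ℤ) := by
        push_cast [Nat.cast_sub hl1]
        ring
      rw [hcast, zpow_neg, zpow_natCast, pow_mul]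
    rw [hrhs]
    obtain ⟨k, rfl⟩ : ∃ k, l = k + 1 := ⟨l - 1, by omega⟩
    rw [show 2 * (k + 1) - 1 = 2 * k + 1 by omega, show (k + 1) - 1 = k by omega]
    have h1r : (0:ℝ) < 1 - r := by linarith
    rw [hrdef]
    generalize phi ^ M = q at hq0' h1q ⊢
    rw [show (1 - q⁻¹)⁻¹ = q / (q - 1) by field_simp]
    rw [div_pow, inv_pow, div_eq_mul_inv, div_eq_mul_inv, ← mul_assoc]
    congr 1
    rw [show 2 * k + 1 = k + (k + 1) by ring, pow_add, mul_inv, mul_assoc,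
      inv_mul_cancel₀ (pow_ne_zero _ hq0'), mul_one]
  rw [← key]
  exact hlt.trans_eq hgt
end

section
/- Let φ = (1+√5)/2, let M ≥ 1 and l ≥ 3 be integers. Then the sum of φ_I^{−M} over all strictly increasing tuples I = (i₁,…,i_l) of integers of length exactly l with i₁ = 0, i₂ odd, and i_{j+1} ≥ i_j + 2 for all j satisfies Σ φ_I^{−M} < (1/(φ^M + 1)) · (φ^{−M}/(φ^M − 1))^{l−1}. -/
/-- Partial sums: `psum s [g₁, …, g_k] = [s, s+g₁, s+g₁+g₂, …]`. -/
def psum : ℕ → List ℕ → List ℕ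
  | s, [] => [s]
  | s, g :: gs => s :: psum (s + g) gs

lemma psum_length (s : ℕ) (gs : List ℕ) : (psum s gs).length = gs.length + 1 := by
  induction gs generalizing s with
  | nil => rfl
  | cons g gs ih => simp [psum, ih]

lemma psum_headI (s : ℕ) (gs : List ℕ) : (psum s gs).headI = s := by
  cases gs <;> rfl

lemma psum_head? (s : ℕ) (gs : List ℕ) : (psum s gs).head? = some s := by
  cases gs <;> rfl

lemma psum_chain' (s : ℕ) (gs : List ℕ) (h : ∀ g ∈ gs, 2 ≤ g) :
    (psum s gs).Chain' (fun a b => a + 2 ≤ b) := by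
  induction gs generalizing s with
  | nil => simp [psum, List.Chain']
  | cons g gs ih =>
    rw [psum, List.Chain', List.isChain_cons]
    refine ⟨?_, ih (s + g) fun x hx => h x (List.mem_cons_of_mem _ hx)⟩
    intro y hy
    rw [psum_head? (s + g) gs, Option.mem_def, Option.some.injEq] at hy
    have := h g List.mem_cons_self
    omega

lemma phiI_psum_ge (s : ℕ) (gs : List ℕ) :
    phi ^ (s + gs.sum) ≤ phiI (psum s gs) := by
  induction gs generalizing s with
  | nil => simp [psum, phiI]
  | cons g gs ih =>
    rw [psum, phiI_cons, List.sum_cons, ← add_assoc]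
    have h1 := ih (s + g)
    have h2 : (0:ℝ) < phi ^ s := pow_pos phi_pos s
    linarith

lemma phiI_psum_gt (s g : ℕ) (gs : List ℕ) :
    phi ^ (s + (g :: gs).sum) < phiI (psum s (g :: gs)) := by
  rw [psum, phiI_cons, List.sum_cons, ← add_assoc]
  have h1 := phiI_psum_ge (s + g) gs
  have h2 : (0:ℝ) < phi ^ s := pow_pos phi_pos s
  linarith

lemma psum_inj : ∀ (gs : List ℕ) (s : ℕ) (gs' : List ℕ),
    psum s gs = psum s gs' → gs = gs' := by
  intro gs
  induction gs with
  | nil =>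
    intro s gs' h
    cases gs' with
    | nil => rfl
    | cons g' t' =>
      have := congrArg List.length h
      rw [psum_length, psum_length] at this
      simp at this
  | cons g t ih =>
    intro s gs' h
    cases gs' with
    | nil =>
      have := congrArg List.length h
      rw [psum_length, psum_length] at this
      simp at this
    | cons g' t' =>
      rw [psum, psum, List.cons.injEq] at h
      have hg : g = g' := by
        have := congrArg List.headI h.2
        rw [psum_headI, psum_headI] at this
        omega
      subst hg
      rw [ih (s + g) t' h.2]

lemma exists_psum : ∀ (t : List ℕ), t ≠ [] → t.Chain' (fun a b => a + 2 ≤ b) →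
    ∃ gs : List ℕ, (∀ g ∈ gs, 2 ≤ g) ∧ t = psum t.headI gs := by
  intro t
  induction t with
  | nil => intro h; exact absurd rfl h
  | cons a t ih =>
    intro _ hc
    cases t with
    | nil => exact ⟨[], by simp, rfl⟩
    | cons b t' =>
      rw [List.Chain', List.isChain_cons_cons] at hc
      obtain ⟨gs, hgs, heq⟩ := ih (by simp) hc.2
      refine ⟨(b - a) :: gs, ?_, ?_⟩
      · intro g hg
        rcases List.mem_cons.mp hg with rfl | hg
        · omega
        · exact hgs g hg
      · show a :: b :: t' = psum a ((b - a) :: gs)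
        rw [psum]
        congr 1
        have hba : a + (b - a) = b := by omega
        rw [hba]
        simpa [List.headI] using heq

lemma exists_map_add_two : ∀ (gs : List ℕ), (∀ g ∈ gs, 2 ≤ g) →
    ∃ ds : List ℕ, gs = ds.map (fun x => x + 2) := by
  intro gs
  induction gs with
  | nil => exact fun _ => ⟨[], rfl⟩
  | cons g t ih =>
    intro h
    obtain ⟨ds, hds⟩ := ih fun x hx => h x (List.mem_cons_of_mem _ hx)
    refine ⟨(g - 2) :: ds, ?_⟩
    have := h g List.mem_cons_self
    simp [← hds]
    omega

lemma ofFn_getD (ds : List ℕ) (n : ℕ) (h : ds.length = n) :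
    List.ofFn (fun j : Fin n => ds.getD j 0) = ds := by
  subst h
  conv_rhs => rw [← List.ofFn_get ds]
  congr 1
  funext j
  exact List.getD_eq_get ds 0 j

lemma pi_tsum (h : ℕ → ℝ) (hs : Summable h) (hnn : ∀ n, 0 ≤ h n) :
    ∀ k : ℕ, Summable (fun c : Fin k → ℕ => ∏ j, h (c j)) ∧
      (∑' c : Fin k → ℕ, ∏ j, h (c j)) = (∑' n, h n) ^ k := by
  intro k
  induction k with
  | zero =>
    refine ⟨.of_finite, ?_⟩
    rw [tsum_eq_single (fun j => 0) (fun b hb => absurd (Subsingleton.elim b _) hb)]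
    simp
  | succ k ih =>
    have key : (fun c : Fin (k+1) → ℕ => ∏ j, h (c j)) ∘ (Fin.consEquiv (fun _ => ℕ))
        = fun p : ℕ × (Fin k → ℕ) => h p.1 * ∏ j, h (p.2 j) := by
      funext p
      simp [Fin.prod_univ_succ, Fin.consEquiv]
    have hG : Summable (fun p : ℕ × (Fin k → ℕ) => h p.1 * ∏ j, h (p.2 j)) :=
      Summable.mul_of_nonneg (f := h) (g := fun c : Fin k → ℕ => ∏ j, h (c j)) hs ih.1
        (fun n => hnn n) (fun c => Finset.prod_nonneg fun j _ => hnn _)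
    have hfe : Summable ((fun c : Fin (k+1) → ℕ => ∏ j, h (c j)) ∘ (Fin.consEquiv (fun _ => ℕ))) := by
      rw [key]; exact hG
    refine ⟨(Fin.consEquiv (fun _ => ℕ)).summable_iff.mp hfe, ?_⟩
    rw [← (Fin.consEquiv (fun _ => ℕ)).tsum_eq (fun c : Fin (k+1) → ℕ => ∏ j, h (c j))]
    have h2 : ∑' p : ℕ × (Fin k → ℕ), (fun c : Fin (k+1) → ℕ => ∏ j, h (c j)) ((Fin.consEquiv (fun _ => ℕ)) p)
        = ∑' p : ℕ × (Fin k → ℕ), h p.1 * ∏ j, h (p.2 j) :=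
      tsum_congr fun p => congrFun key p
    rw [h2, ← Summable.tsum_mul_tsum hs ih.1 hG, ih.2, pow_succ]
    ring

/-- Let `M ≥ 1` and `l ≥ 3`.  The sum of `φ_I^(−M)` over all strictly increasing tuples
`I = (i₁, …, i_l)` of length exactly `l`, with `i₁ = 0`, `i₂` odd, and consecutive entries
differing by at least 2, is finite and satisfies
`Σ φ_I^(−M) < (1/(φ^M + 1)) · (φ^(−M)/(φ^M − 1))^(l−1)`. -/
theorem tsum_fixed_length_odd_bound (M l : ℕ) (hM : 1 ≤ M) (hl : 3 ≤ l) :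
    Summable (fun t : {t : List ℕ // t.length = l ∧ t.headI = 0 ∧ Odd t.tail.headI ∧
        t.Chain' (fun a b => a + 2 ≤ b)} => phiI t.1 ^ (-(M : ℤ))) ∧
    (∑' t : {t : List ℕ // t.length = l ∧ t.headI = 0 ∧ Odd t.tail.headI ∧
        t.Chain' (fun a b => a + 2 ≤ b)}, phiI t.1 ^ (-(M : ℤ))) <
      (1 / (phi ^ M + 1)) * (phi ^ (-(M : ℤ)) / (phi ^ M - 1)) ^ (l - 1) := by
  have hq1 : (1:ℝ) < phi ^ M := one_lt_pow₀ one_lt_phi (by omega)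
  have hq0 : (0:ℝ) < phi ^ M := lt_trans one_pos hq1
  set q : ℝ := phi ^ M with hqdef
  set r : ℝ := q⁻¹ with hrdef
  have hr0 : 0 < r := inv_pos.mpr hq0
  have hr1 : r < 1 := inv_lt_one_of_one_lt₀ hq1
  -- the gap-list for a parameter p
  set gl : ℕ × (Fin (l - 2) → ℕ) → List ℕ :=
    fun p => (2 * p.1 + 3) :: (List.ofFn p.2).map (fun x => x + 2) with hgl
  -- membership
  have hmem : ∀ p : ℕ × (Fin (l - 2) → ℕ),
      (psum 0 (gl p)).length = l ∧ (psum 0 (gl p)).headI = 0 ∧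
      Odd (psum 0 (gl p)).tail.headI ∧
      (psum 0 (gl p)).Chain' (fun a b => a + 2 ≤ b) := by
    intro p
    refine ⟨?_, psum_headI _ _, ?_, ?_⟩
    · rw [psum_length, hgl]
      simp
      omega
    · show Odd (psum 0 (gl p)).tail.headI
      rw [hgl]
      show Odd (psum 0 ((2 * p.1 + 3) :: _)).tail.headI
      rw [psum]
      simp only [List.tail_cons, psum_headI]
      exact ⟨p.1 + 1, by omega⟩
    · apply psum_chain'
      intro g hg
      rw [hgl] at hg
      rcases List.mem_cons.mp hg with rfl | hg
      · omega
      · obtain ⟨x, _, rfl⟩ := List.mem_map.mp hg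
        omega
  set E : ℕ × (Fin (l - 2) → ℕ) → {t : List ℕ // t.length = l ∧ t.headI = 0 ∧ Odd t.tail.headI ∧
      t.Chain' (fun a b => a + 2 ≤ b)} := fun p => ⟨psum 0 (gl p), hmem p⟩ with hE
  have hEinj : Function.Injective E := by
    intro p p' h
    have h1 : gl p = gl p' := psum_inj _ _ _ (congrArg Subtype.val h)
    rw [hgl] at h1
    simp only [List.cons.injEq] at h1
    have ha : p.1 = p'.1 := by omega
    have hc : p.2 = p'.2 := by
      apply List.ofFn_injective
      have hinj : Function.Injective (fun x : ℕ => x + 2) := by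
        intro x y hxy
        simp only at hxy
        omega
      exact List.map_injective_iff.mpr hinj h1.2
    exact Prod.ext ha hc
  have hEsurj : Function.Surjective E := by
    rintro ⟨t, htl, hth, htodd, htc⟩
    have htne : t ≠ [] := by
      intro h; rw [h] at htl; simp at htl; omega
    obtain ⟨gs, hgs2, hgseq⟩ := exists_psum t htne htc
    rw [hth] at hgseq
    have hgslen : gs.length = l - 1 := by
      have := congrArg List.length hgseq
      rw [psum_length] at this
      omega
    cases gs with
    | nil => simp at hgslen; omega
    | cons g gs' =>
      have hg2 : 2 ≤ g := hgs2 g List.mem_cons_self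
      have hgodd : Odd g := by
        have : t.tail.headI = g := by
          rw [hgseq, psum]
          simp only [List.tail_cons, psum_headI]
          omega
        rwa [this] at htodd
      obtain ⟨m, hm⟩ := hgodd
      have hg3 : 3 ≤ g := by omega
      obtain ⟨ds, hds⟩ := exists_map_add_two gs' (fun x hx => hgs2 x (List.mem_cons_of_mem _ hx))
      have hdslen : ds.length = l - 2 := by
        have := congrArg List.length hds
        simp at this
        simp at hgslen
        omega
      refine ⟨(m - 1, fun j : Fin (l - 2) => ds.getD j 0), ?_⟩
      apply Subtype.ext
      show psum 0 (gl (m - 1, fun j : Fin (l - 2) => ds.getD j 0)) = t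
      rw [hgl, hgseq]
      congr 1
      simp only
      rw [ofFn_getD ds (l - 2) hdslen, ← hds]
      congr 1
      omega
  set Ee : ℕ × (Fin (l - 2) → ℕ) ≃ {t : List ℕ // t.length = l ∧ t.headI = 0 ∧ Odd t.tail.headI ∧
      t.Chain' (fun a b => a + 2 ≤ b)} := Equiv.ofBijective E ⟨hEinj, hEsurj⟩ with hEe
  -- dominating function
  set F : ℕ × (Fin (l - 2) → ℕ) → ℝ :=
    fun p => r ^ (2 * p.1 + 3) * ∏ j, r ^ (p.2 j + 2) with hFdef
  -- pointwise strict bound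
  have keyp : ∀ p : ℕ × (Fin (l - 2) → ℕ), phiI (E p).1 ^ (-(M : ℤ)) < F p := by
    intro p
    have hsum : ((List.ofFn p.2).map (fun x => x + 2)).sum = ∑ j, (p.2 j + 2) := by
      rw [List.map_ofFn]
      exact Fin.sum_ofFn _
    set S : ℕ := (gl p).sum with hSdef
    have hS : S = (2 * p.1 + 3) + ∑ j, (p.2 j + 2) := by
      rw [hSdef, hgl, List.sum_cons, hsum]
    have h1 : phi ^ S < phiI (psum 0 (gl p)) := by
      have := phiI_psum_gt 0 (2 * p.1 + 3) ((List.ofFn p.2).map (fun x => x + 2))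
      rw [Nat.zero_add] at this
      rw [hSdef, hgl]
      exact this
    have hpos : (0:ℝ) < phi ^ S := pow_pos phi_pos _
    have hpos2 : (0:ℝ) < phiI (psum 0 (gl p)) := lt_trans hpos h1
    have h2 : (phi ^ S) ^ M < (phiI (psum 0 (gl p))) ^ M :=
      pow_lt_pow_left₀ h1 hpos.le (by omega)
    have h3 : ((phiI (psum 0 (gl p))) ^ M)⁻¹ < ((phi ^ S) ^ M)⁻¹ :=
      inv_strictAnti₀ (pow_pos hpos M) h2
    have h4 : ((phi ^ S) ^ M)⁻¹ = r ^ S := by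
      rw [← pow_mul, mul_comm, pow_mul, ← inv_pow, hrdef, hqdef]
    have h5 : r ^ S = F p := by
      rw [hFdef, hS, pow_add]
      congr 1
      exact (Finset.prod_pow_eq_pow_sum _ _ _).symm
    have h6 : phiI (E p).1 ^ (-(M : ℤ)) = ((phiI (psum 0 (gl p))) ^ M)⁻¹ := by
      rw [hE]
      rw [zpow_neg, zpow_natCast]
    rw [h6, ← h5, ← h4]
    exact h3
  -- summability and sum of F
  have hgeo2 : r ^ 2 < 1 := by nlinarith
  have hexp : ∀ a : ℕ, r ^ (2 * a + 3) = r ^ 3 * (r ^ 2) ^ a := by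
    intro a
    rw [← pow_mul, ← pow_add]
    congr 1
    omega
  have hA : Summable (fun a : ℕ => r ^ (2 * a + 3)) := by
    have := (summable_geometric_of_lt_one (by positivity) hgeo2).mul_left (r ^ 3)
    exact this.congr fun a => (hexp a).symm
  have hAt : (∑' a : ℕ, r ^ (2 * a + 3)) = r ^ 3 * (1 - r ^ 2)⁻¹ := by
    rw [tsum_congr hexp, tsum_mul_left, tsum_geometric_of_lt_one (by positivity) hgeo2]
  have hexp2 : ∀ n : ℕ, r ^ (n + 2) = r ^ 2 * r ^ n := by
    intro n
    rw [← pow_add]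
    congr 1
    omega
  have hh : Summable (fun n : ℕ => r ^ (n + 2)) := by
    have := (summable_geometric_of_lt_one hr0.le hr1).mul_left (r ^ 2)
    exact this.congr fun n => (hexp2 n).symm
  have hht : (∑' n : ℕ, r ^ (n + 2)) = r ^ 2 * (1 - r)⁻¹ := by
    rw [tsum_congr hexp2, tsum_mul_left, tsum_geometric_of_lt_one hr0.le hr1]
  obtain ⟨hPsum, hPt⟩ := pi_tsum (fun n => r ^ (n + 2)) hh (fun n => by positivity) (l - 2)
  have hF : Summable F :=
    Summable.mul_of_nonneg (f := fun a : ℕ => r ^ (2 * a + 3))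
      (g := fun c : Fin (l - 2) → ℕ => ∏ j, r ^ (c j + 2)) hA hPsum
      (fun a => by positivity) (fun c => Finset.prod_nonneg fun j _ => by positivity)
  have hFt : (∑' p : ℕ × (Fin (l - 2) → ℕ), F p)
      = (r ^ 3 * (1 - r ^ 2)⁻¹) * (r ^ 2 * (1 - r)⁻¹) ^ (l - 2) := by
    rw [hFdef, ← Summable.tsum_mul_tsum hA hPsum hF, hAt, hPt, hht]
  -- summability of f ∘ Ee
  have hfE : Summable (fun p : ℕ × (Fin (l - 2) → ℕ) => phiI (Ee p).1 ^ (-(M : ℤ))) := by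
    refine Summable.of_nonneg_of_le (fun p => ?_) (fun p => (keyp p).le) hF
    have h1 : phi ^ (gl p).sum < phiI (psum 0 (gl p)) := by
      have := phiI_psum_gt 0 (2 * p.1 + 3) ((List.ofFn p.2).map (fun x => x + 2))
      rw [Nat.zero_add] at this
      rw [hgl]
      exact this
    have hpos2 : (0:ℝ) < phiI (psum 0 (gl p)) := lt_trans (pow_pos phi_pos _) h1
    positivity
  have hsummf : Summable (fun t : {t : List ℕ // t.length = l ∧ t.headI = 0 ∧ Odd t.tail.headI ∧
      t.Chain' (fun a b => a + 2 ≤ b)} => phiI t.1 ^ (-(M : ℤ))) :=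
    Ee.summable_iff.mp hfE
  refine ⟨hsummf, ?_⟩
  -- the strict inequality
  have hlt : (∑' t : {t : List ℕ // t.length = l ∧ t.headI = 0 ∧ Odd t.tail.headI ∧
        t.Chain' (fun a b => a + 2 ≤ b)}, phiI t.1 ^ (-(M : ℤ)))
      < ∑' p : ℕ × (Fin (l - 2) → ℕ), F p := by
    rw [← Ee.tsum_eq (fun t : {t : List ℕ // t.length = l ∧ t.headI = 0 ∧ Odd t.tail.headI ∧
        t.Chain' (fun a b => a + 2 ≤ b)} => phiI t.1 ^ (-(M : ℤ)))]
    exact Summable.tsum_lt_tsum (fun p => (keyp p).le) (keyp (0, fun _ => 0)) hfE hF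
  -- final algebra
  have hrq : q * r = 1 := mul_inv_cancel₀ (ne_of_gt hq0)
  have hq1' : q - 1 ≠ 0 := sub_ne_zero.mpr (ne_of_gt hq1)
  have hqp1 : q + 1 ≠ 0 := by positivity
  have h1r : (1:ℝ) - r ≠ 0 := ne_of_gt (by linarith)
  have h1r2 : (1:ℝ) - r ^ 2 ≠ 0 := ne_of_gt (by nlinarith)
  have hzM : phi ^ (-(M : ℤ)) = r := by
    rw [zpow_neg, zpow_natCast, hrdef, hqdef]
  have hB : r ^ 2 * (1 - r)⁻¹ = r / (q - 1) := by
    clear_value q r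
    field_simp
    linear_combination hrq
  have hA' : r ^ 3 * (1 - r ^ 2)⁻¹ = (1 / (q + 1)) * (r / (q - 1)) := by
    clear_value q r
    field_simp
    linear_combination (q * r + 1) * hrq
  have hfinal : (∑' p : ℕ × (Fin (l - 2) → ℕ), F p)
      = (1 / (q + 1)) * (r / (q - 1)) ^ (l - 1) := by
    rw [hFt, hB, hA', show l - 1 = (l - 2) + 1 from by omega, pow_succ]
    ring
  rw [hzM]
  calc (∑' t : {t : List ℕ // t.length = l ∧ t.headI = 0 ∧ Odd t.tail.headI ∧
        t.Chain' (fun a b => a + 2 ≤ b)}, phiI t.1 ^ (-(M : ℤ)))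
      < ∑' p : ℕ × (Fin (l - 2) → ℕ), F p := hlt
    _ = (1 / (q + 1)) * (r / (q - 1)) ^ (l - 1) := hfinal
end
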